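/- arXiv:1703.09464 — 2 statements merged into one kernel-verified Lean document; each statement's English description precedes it below -/
import Mathlib

section
/- Let k be a field of characteristic zero, N ≥ 2, and let V ⊆ k[u]/(u^N) be the subspace spanned by u, u², ..., u^(N−1). For each a ∈ k let φ_a be the k-algebra endomorphism of k[u]/(u^N) determined by φ_a(u) = u·(1 + a·u)⁻¹; each φ_a preserves V. Then the only one-dimensional subspace L of V with φ_a(L) ⊆ L for all a ∈ k is the span of u^(N−1). -/
open Polynomial Finset

set_option maxHeartbeats 1000000 in
set_option synthInstance.maxHeartbeats 400000 in
/-- Over a field of characteristic zero, with `R = k[u]/(u^N)` (`N ≥ 2`),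
`V = span(u,…,u^(N-1))`, and `φ_a` the `k`-algebra endomorphisms with
`φ_a(u) = u·(1+a·u)⁻¹`, the only one-dimensional subspace `L ⊆ V` stable
under all `φ_a` is the span of `u^(N-1)`. -/
theorem stmt_9 (k : Type*) [Field k] [CharZero k] (N : ℕ) (hN : 2 ≤ N) :
    let R := Polynomial k ⧸ Ideal.span {(Polynomial.X : Polynomial k) ^ N}
    let u : R := Ideal.Quotient.mk _ Polynomial.X
    let V : Submodule k R :=
      Submodule.span k {x : R | ∃ j : ℕ, 1 ≤ j ∧ j ≤ N - 1 ∧ x = u ^ j}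
    ∀ φ : k → (R →ₐ[k] R),
      (∀ a : k, φ a u = u * Ring.inverse (1 + algebraMap k R a * u)) →
      ∀ L : Submodule k R, L ≤ V → Module.finrank k L = 1 →
        (∀ a : k, L.map (φ a).toLinearMap ≤ L) →
        L = Submodule.span k {u ^ (N - 1)} := by
  intro R u V φ hφ L hLV hfr hstab
  classical
  set I : Ideal (Polynomial k) := Ideal.span {(X : k[X]) ^ N} with hI
  let mkq : k[X] →ₐ[k] R := Ideal.Quotient.mkₐ k I
  have hmk : ∀ p : k[X], mkq p = Ideal.Quotient.mk I p := fun p => rfl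
  have hu : u = mkq X := rfl
  -- a generator of L
  haveI hfree : Module.Free k ↥L := Module.Free.of_divisionRing k ↥L
  obtain ⟨v0, hv0ne, hv0span⟩ := finrank_eq_one_iff'.mp hfr
  set v : R := (v0 : R) with hv
  have hvne : v ≠ 0 := fun h => hv0ne (Subtype.ext h)
  have hvL : v ∈ L := v0.2
  have hLspan : L = Submodule.span k {v} := by
    apply le_antisymm
    · intro w hw
      obtain ⟨c, hc⟩ := hv0span ⟨w, hw⟩
      have : c • v = w := congrArg Subtype.val hc
      rw [← this]
      exact Submodule.smul_mem _ _ (Submodule.mem_span_singleton_self v)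
    · rw [Submodule.span_singleton_le_iff_mem]; exact hvL
  -- the representative polynomial P of v
  have hvV : v ∈ V := hLV hvL
  have hVimg : {x : R | ∃ j : ℕ, 1 ≤ j ∧ j ≤ N - 1 ∧ x = u ^ j}
      = mkq '' {p : k[X] | ∃ j : ℕ, 1 ≤ j ∧ j ≤ N - 1 ∧ p = X ^ j} := by
    ext x
    constructor
    · rintro ⟨j, hj1, hj2, rfl⟩
      exact ⟨X ^ j, ⟨j, hj1, hj2, rfl⟩, by rw [map_pow, ← hu]⟩
    · rintro ⟨p, ⟨j, hj1, hj2, rfl⟩, rfl⟩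
      exact ⟨j, hj1, hj2, by rw [map_pow, ← hu]⟩
  have hvV' : v ∈ Submodule.map mkq.toLinearMap
      (Submodule.span k {p : k[X] | ∃ j : ℕ, 1 ≤ j ∧ j ≤ N - 1 ∧ p = X ^ j}) := by
    rw [Submodule.map_span]
    have hcoe : ⇑mkq.toLinearMap '' {p : k[X] | ∃ j : ℕ, 1 ≤ j ∧ j ≤ N - 1 ∧ p = X ^ j}
        = ⇑mkq '' {p : k[X] | ∃ j : ℕ, 1 ≤ j ∧ j ≤ N - 1 ∧ p = X ^ j} := rfl
    rw [hcoe, ← hVimg]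
    exact hvV
  obtain ⟨P, hPmem, hPv⟩ := hvV'
  have hPprop : P ∈ Polynomial.degreeLT k N ⊓ LinearMap.ker (lcoeff k 0) := by
    refine Submodule.span_le.mpr ?_ hPmem
    rintro p ⟨j, hj1, hj2, rfl⟩
    simp only [SetLike.mem_coe]
    refine Submodule.mem_inf.mpr ⟨?_, ?_⟩
    · rw [Polynomial.mem_degreeLT, degree_X_pow]
      exact_mod_cast (by omega : j < N)
    · simp only [LinearMap.mem_ker, lcoeff_apply, coeff_X_pow]
      rw [if_neg (by omega)]
  set c : ℕ → k := fun i => P.coeff i with hc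
  have hc0 : c 0 = 0 := hPprop.2
  have hPdeg : P.degree < N := Polynomial.mem_degreeLT.mp hPprop.1
  have hchigh : ∀ i, N ≤ i → c i = 0 := fun i hi =>
    coeff_eq_zero_of_degree_lt (lt_of_lt_of_le hPdeg (by exact_mod_cast hi))
  have hPnat : P.natDegree < N := by
    rcases eq_or_ne P 0 with h | h
    · rw [h, natDegree_zero]; omega
    · exact natDegree_lt_iff_degree_lt h |>.mpr hPdeg
  -- the geometric series G with (1+X)*G ≡ 1
  set G : k[X] := ∑ j ∈ range N, (- X) ^ j with hG
  have hgeom : (1 + X) * G = 1 - (-X) ^ N := by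
    have h := geom_sum_mul (-X : k[X]) N
    rw [hG]
    linear_combination (-1 : k[X]) * h
  have hXN0 : mkq ((X : k[X]) ^ N) = 0 := by
    rw [hmk, Ideal.Quotient.eq_zero_iff_mem, hI]
    exact Ideal.mem_span_singleton_self _
  have hneg : mkq ((-X : k[X]) ^ N) = 0 := by
    rw [neg_pow, map_mul, hXN0, mul_zero]
  have hunit : (1 + u) * mkq G = 1 := by
    calc (1 + u) * mkq G = mkq ((1 + X) * G) := by rw [map_mul, map_add, map_one, hu]
      _ = 1 := by rw [hgeom, map_sub, map_one, hneg, sub_zero]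
  have hIsU : IsUnit (1 + u) := IsUnit.of_mul_eq_one _ hunit
  have hinv : Ring.inverse (1 + u) = mkq G := by
    calc Ring.inverse (1 + u) = Ring.inverse (1 + u) * ((1 + u) * mkq G) := by
          rw [hunit, mul_one]
      _ = (Ring.inverse (1 + u) * (1 + u)) * mkq G := by ring
      _ = mkq G := by rw [Ring.inverse_mul_cancel _ hIsU, one_mul]
  have hφ1u : φ 1 u = mkq (X * G) := by
    rw [hφ 1, map_one, one_mul, hinv, hu, map_mul]
  -- express v and φ 1 v via aeval
  have haeval : ∀ p : k[X], aeval u p = mkq p := by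
    intro p
    rw [hu, aeval_algHom_apply mkq X p, aeval_X_left_apply]
  have hvP : v = mkq P := hPv.symm
  have hφ1v : φ 1 v = mkq (∑ i ∈ range N, c i • (X * G) ^ i) := by
    have h1 : φ 1 v = aeval (φ 1 u) P := by
      rw [hvP, ← haeval P, aeval_algHom_apply (φ 1) u P]
    rw [h1, hφ1u, aeval_eq_sum_range' hPnat (mkq (X * G)), map_sum]
    exact Finset.sum_congr rfl fun i _ => by rw [map_smul, map_pow]
  -- eigenvector equation
  have hφ1vL : φ 1 v ∈ L := hstab 1 ⟨v, hvL, rfl⟩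
  rw [hLspan] at hφ1vL
  obtain ⟨lam, hlam⟩ := Submodule.mem_span_singleton.mp hφ1vL
  have heig : ∀ t < N, (∑ i ∈ range N, c i • (X * G) ^ i).coeff t = lam * c t := by
    intro t ht
    have heq : mkq (∑ i ∈ range N, c i • (X * G) ^ i) = mkq (lam • P) := by
      rw [← hφ1v, map_smul, ← hvP, hlam]
    rw [hmk, hmk, Ideal.Quotient.eq, hI, Ideal.mem_span_singleton] at heq
    have h2 := (X_pow_dvd_iff.mp heq) t ht
    rw [coeff_sub, sub_eq_zero] at h2
    rw [h2, coeff_smul, smul_eq_mul]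
  -- coefficients of sums of powers
  have hcoeffQ : ∀ t, (∑ i ∈ range N, c i • (X * G) ^ i).coeff t
      = ∑ i ∈ range N, c i * (if i ≤ t then (G ^ i).coeff (t - i) else 0) := by
    intro t
    rw [finset_sum_coeff]
    exact Finset.sum_congr rfl fun i _ => by
      rw [coeff_smul, smul_eq_mul, mul_pow, mul_comm ((X : k[X]) ^ i), coeff_mul_X_pow']
  have hGeval0 : G.eval 0 = 1 := by
    rw [hG, eval_finset_sum]
    rw [Finset.sum_eq_single 0]
    · simp
    · intro j _ hj
      simp [zero_pow hj]
    · intro h; exact absurd (Finset.mem_range.mpr (by omega)) h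
  have hG0 : ∀ i : ℕ, (G ^ i).coeff 0 = 1 := by
    intro i
    rw [coeff_zero_eq_eval_zero, eval_pow, hGeval0, one_pow]
  have hGc1 : G.coeff 1 = -1 := by
    rw [hG, finset_sum_coeff]
    rw [Finset.sum_eq_single 1]
    · simp
    · intro j _ hj
      rw [neg_pow, ← C_1, ← map_neg, ← map_pow, coeff_C_mul, coeff_X_pow,
        if_neg (fun h => hj h.symm), mul_zero]
    · intro h; exact absurd (Finset.mem_range.mpr (by omega)) h
  have hG1 : ∀ i : ℕ, (G ^ i).coeff 1 = -(i : k) := by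
    intro i
    have h1 : (derivative (G ^ i)).coeff 0 = (G ^ i).coeff 1 * 1 := by
      rw [coeff_derivative]; norm_num
    have h2 : (derivative (G ^ i)).coeff 0 = -(i : k) := by
      rw [derivative_pow, coeff_zero_eq_eval_zero]
      have h3 : (derivative G).eval 0 = -1 := by
        rw [← coeff_zero_eq_eval_zero, coeff_derivative, hGc1]; norm_num
      rw [eval_mul, eval_mul, eval_C, eval_pow, hGeval0, one_pow, mul_one, h3]
      ring
    rw [h1, mul_one] at h2
    exact h2
  -- no nonzero coefficient below N-1
  have hlow : ∀ i, i ≤ N - 2 → c i = 0 := by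
    by_contra hcon
    push_neg at hcon
    have hex : ∃ i, i ≤ N - 2 ∧ c i ≠ 0 := hcon
    set m := Nat.find hex with hm
    obtain ⟨hmle, hmne⟩ : m ≤ N - 2 ∧ c m ≠ 0 := Nat.find_spec hex
    have hmin : ∀ j, j < m → c j = 0 := by
      intro j hj
      by_contra hcj
      exact Nat.find_min hex hj ⟨by omega, hcj⟩
    have hm1 : 1 ≤ m := by
      rcases Nat.eq_zero_or_pos m with h | h
      · exact absurd (h ▸ hc0) hmne
      · exact h
    have hmN : m + 1 < N := by omega
    -- coefficient at m
    have hQm : (∑ i ∈ range N, c i • (X * G) ^ i).coeff m = c m := by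
      rw [hcoeffQ]
      rw [Finset.sum_eq_single m]
      · rw [if_pos le_rfl, Nat.sub_self, hG0, mul_one]
      · intro i _ hi
        rcases lt_or_gt_of_ne hi with h | h
        · rw [hmin i h, zero_mul]
        · rw [if_neg (by omega), mul_zero]
      · intro h; exact absurd (Finset.mem_range.mpr (by omega)) h
    have hlam1 : lam = 1 := by
      have h := heig m (by omega)
      rw [hQm] at h
      have h2 : lam * c m = 1 * c m := by rw [one_mul, ← h]
      exact mul_right_cancel₀ hmne h2
    -- coefficient at m+1
    have hQm1 : (∑ i ∈ range N, c i • (X * G) ^ i).coeff (m + 1)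
        = c m * (-(m : k)) + c (m + 1) := by
      rw [hcoeffQ]
      rw [← Finset.sum_subset (s₁ := {m, m + 1})
        (by intro x hx
            simp only [Finset.mem_insert, Finset.mem_singleton] at hx
            rcases hx with rfl | rfl <;> exact Finset.mem_range.mpr (by omega))]
      · rw [Finset.sum_pair (by omega : m ≠ m + 1)]
        rw [if_pos (Nat.le_succ m), if_pos (le_refl (m + 1)),
          Nat.add_sub_cancel_left, Nat.sub_self, hG0, hG1, mul_one]
      · intro i hi hni
        simp only [Finset.mem_insert, Finset.mem_singleton, not_or] at hni
        rcases Nat.lt_or_ge i m with h | h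
        · rw [hmin i h, zero_mul]
        · rw [if_neg (by omega), mul_zero]
    have heq := heig (m + 1) hmN
    rw [hQm1, hlam1, one_mul] at heq
    have hzero : (m : k) * c m = 0 := by linear_combination -heq
    rcases mul_eq_zero.mp hzero with h | h
    · exact absurd (Nat.cast_eq_zero.mp h) (by omega)
    · exact hmne h
  -- conclude P = c(N-1) • X^(N-1)
  have hP : P = C (c (N - 1)) * X ^ (N - 1) := by
    ext t
    rw [coeff_C_mul, coeff_X_pow]
    rcases eq_or_ne t (N - 1) with rfl | h
    · rw [if_pos rfl, mul_one]
    · rw [if_neg h, mul_zero]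
      rcases Nat.lt_or_ge t N with h2 | h2
      · exact hlow t (by omega)
      · exact hchigh t h2
  have hvform : v = c (N - 1) • u ^ (N - 1) := by
    rw [hvP, hP, map_mul, map_pow, ← hu]
    have h3 : mkq (C (c (N - 1))) = algebraMap k R (c (N - 1)) := by
      rw [← Polynomial.algebraMap_eq]
      exact mkq.commutes _
    rw [h3, ← Algebra.smul_def]
  have hcne : c (N - 1) ≠ 0 := by
    intro h
    rw [h, zero_smul] at hvform
    exact hvne hvform
  rw [hLspan, hvform]
  exact Submodule.span_singleton_smul_eq (isUnit_iff_ne_zero.mpr hcne) _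
end

section
/- Let k be an infinite field and M ≥ 1. If A ⊆ k[t]/(t^M) is a k-subalgebra invariant under all automorphisms σ_a(t) = a·t for a ∈ k×, then there is an additive submonoid S of ℕ such that A = span_k { t^i : i ∈ S, i < M } (with t⁰ = 1). -/
open Polynomial

/-- Every element of `k[X]/(X^M)` is a combination of the monomials `t^i`, `i < M`. -/
lemma rep_lemma_stmt12 (k : Type*) [Field k] (M : ℕ) (hM : 1 ≤ M)
    (x : Polynomial k ⧸ Ideal.span {(Polynomial.X : Polynomial k) ^ M}) :
    ∃ c : Fin M → k, x = ∑ i : Fin M,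
      c i • (Ideal.Quotient.mk (Ideal.span {(Polynomial.X : Polynomial k) ^ M})
        Polynomial.X) ^ (i : ℕ) := by
  obtain ⟨p, rfl⟩ := Ideal.Quotient.mk_surjective x
  set I := Ideal.span {(Polynomial.X : Polynomial k) ^ M}
  have hmonic : (Polynomial.X ^ M : Polynomial k).Monic := monic_X_pow M
  set q : Polynomial k := p %ₘ (Polynomial.X ^ M) with hq
  have hqp : Ideal.Quotient.mk I q = Ideal.Quotient.mk I p := by
    rw [Ideal.Quotient.eq]
    rw [hq, modByMonic_eq_sub_mul_div p (Polynomial.X ^ M)]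
    have : p - (Polynomial.X ^ M) * (p /ₘ Polynomial.X ^ M) - p
        = -((Polynomial.X ^ M) * (p /ₘ Polynomial.X ^ M)) := by ring
    rw [this]
    exact neg_mem (Ideal.mem_span_singleton.2 (dvd_mul_right _ _))
  have hdeg : q.natDegree < M := by
    have h1 : (Polynomial.X ^ M : Polynomial k) ≠ 1 := by
      intro h
      have := congrArg natDegree h
      simp [natDegree_X_pow] at this
      omega
    have := natDegree_modByMonic_lt p hmonic h1
    simpa [natDegree_X_pow] using this
  refine ⟨fun i => q.coeff i, ?_⟩
  rw [← hqp]
  conv_lhs => rw [q.as_sum_range' M hdeg]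
  rw [map_sum, ← Fin.sum_univ_eq_sum_range
    (fun i => Ideal.Quotient.mk I (Polynomial.monomial i (q.coeff i)))]
  congr 1
  ext i
  rw [← Polynomial.C_mul_X_pow_eq_monomial, map_mul, map_pow]
  rw [show (Ideal.Quotient.mk I) (Polynomial.C (q.coeff i))
      = algebraMap k _ (q.coeff i) from rfl, ← Algebra.smul_def]

/-- Over an infinite field `k`, a subalgebra `A` of `k[t]/(t^M)` stable under
all automorphisms `σ_a : t ↦ a·t` (`a ∈ kˣ`) is the span of the monomials
`t^i` with `i` ranging over an additive submonoid of `ℕ` (and `i < M`). -/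
theorem stmt_12 (k : Type*) [Field k] [Infinite k] (M : ℕ) (hM : 1 ≤ M) :
    let R := Polynomial k ⧸ Ideal.span {(Polynomial.X : Polynomial k) ^ M}
    let t : R := Ideal.Quotient.mk _ Polynomial.X
    ∀ σ : kˣ → (R →ₐ[k] R),
      (∀ a : kˣ, σ a t = (a : k) • t) →
      ∀ A : Subalgebra k R, (∀ a : kˣ, A.map (σ a) ≤ A) →
        ∃ S : AddSubmonoid ℕ,
          Subalgebra.toSubmodule A =
            Submodule.span k {x : R | ∃ i : ℕ, i ∈ S ∧ i < M ∧ x = t ^ i} := by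
  intro R t σ hσ A hA
  -- the submonoid of exponents
  refine ⟨{ carrier := {i : ℕ | t ^ i ∈ A},
            zero_mem' := by simpa using A.one_mem,
            add_mem' := fun hi hj => by simpa [pow_add] using mul_mem hi hj }, ?_⟩
  -- distinct nonzero scalars
  have hinf : Infinite {x : k // x ≠ 0} := by
    have h1 : ({(0 : k)}ᶜ : Set k).Infinite := (Set.finite_singleton 0).infinite_compl
    have h2 : ({x : k | x ≠ 0} : Set k) = ({(0 : k)}ᶜ : Set k) := by ext y; simp
    rw [show {x : k // x ≠ 0} = ↥({x : k | x ≠ 0} : Set k) from rfl,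
      Set.infinite_coe_iff, h2]
    exact h1
  let e := Infinite.natEmbedding {x : k // x ≠ 0}
  let v : Fin M → k := fun j => (e (j : ℕ)).1
  have hv0 : ∀ j, v j ≠ 0 := fun j => (e (j : ℕ)).2
  have hvinj : Function.Injective v := by
    intro j1 j2 h
    exact Fin.val_injective (e.injective (Subtype.coe_injective h))
  let a : Fin M → kˣ := fun j => Units.mk0 (v j) (hv0 j)
  -- vandermonde setup
  set V : Matrix (Fin M) (Fin M) k := Matrix.vandermonde v with hV
  have hdet : IsUnit V.det := by
    rw [isUnit_iff_ne_zero]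
    exact Matrix.det_vandermonde_ne_zero_iff.2 hvinj
  have hWV : V⁻¹ * V = 1 := Matrix.nonsing_inv_mul V hdet
  apply le_antisymm
  · -- A ⊆ span of its monomials
    intro x hx
    obtain ⟨c, hxc⟩ := rep_lemma_stmt12 k M hM x
    -- x = ∑ i, c i • t ^ i  (t is defeq to the mk of X)
    have hxrep : x = ∑ i : Fin M, c i • t ^ (i : ℕ) := hxc
    -- σ_a acts diagonally
    have hsigma : ∀ j : Fin M, σ (a j) x = ∑ i : Fin M, (V j i * c i) • t ^ (i : ℕ) := by
      intro j
      rw [hxrep, map_sum]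
      refine Finset.sum_congr rfl fun i _ => ?_
      rw [map_smul, map_pow, hσ (a j), _root_.smul_pow, smul_smul]
      congr 1
      rw [hV]
      simp [Matrix.vandermonde, a, mul_comm]
    -- each coordinate piece lies in A
    have hkey : ∀ i : Fin M, c i • t ^ (i : ℕ) ∈ A := by
      intro i0
      have hcomb : c i0 • t ^ (i0 : ℕ) = ∑ j : Fin M, V⁻¹ i0 j • σ (a j) x := by
        calc c i0 • t ^ (i0 : ℕ)
            = ∑ i : Fin M, ((1 : Matrix (Fin M) (Fin M) k) i0 i * c i) • t ^ (i : ℕ) := by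
              rw [Finset.sum_eq_single i0]
              · rw [Matrix.one_apply_eq, one_mul]
              · intro b _ hb
                rw [Matrix.one_apply_ne (Ne.symm hb), zero_mul, zero_smul]
              · intro h; exact absurd (Finset.mem_univ i0) h
          _ = ∑ i : Fin M, ((V⁻¹ * V) i0 i * c i) • t ^ (i : ℕ) := by rw [hWV]
          _ = ∑ i : Fin M, ∑ j : Fin M, (V⁻¹ i0 j * (V j i * c i)) • t ^ (i : ℕ) := by
              refine Finset.sum_congr rfl fun i _ => ?_
              rw [Matrix.mul_apply, Finset.sum_mul, Finset.sum_smul]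
              refine Finset.sum_congr rfl fun j _ => ?_
              ring_nf
          _ = ∑ j : Fin M, ∑ i : Fin M, (V⁻¹ i0 j * (V j i * c i)) • t ^ (i : ℕ) :=
              Finset.sum_comm
          _ = ∑ j : Fin M, V⁻¹ i0 j • σ (a j) x := by
              refine Finset.sum_congr rfl fun j _ => ?_
              rw [hsigma j, Finset.smul_sum]
              refine Finset.sum_congr rfl fun i _ => ?_
              rw [smul_smul]
      rw [hcomb]
      refine Subalgebra.sum_mem A fun j _ => Subalgebra.smul_mem A ?_ _
      exact hA (a j) ⟨x, hx, rfl⟩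
    rw [hxrep]
    refine Submodule.sum_mem _ fun i _ => ?_
    by_cases hci : c i = 0
    · simp [hci]
    · have htA : t ^ (i : ℕ) ∈ A := by
        have := Subalgebra.smul_mem A (hkey i) (c i)⁻¹
        rwa [smul_smul, inv_mul_cancel₀ hci, one_smul] at this
      refine Submodule.smul_mem _ _ (Submodule.subset_span ?_)
      exact ⟨(i : ℕ), htA, i.isLt, rfl⟩
  · -- span ⊆ A
    rw [Submodule.span_le]
    rintro x ⟨i, hiS, hiM, rfl⟩
    exact hiS
end
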